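/- Failure of the strong comparison principle in one dimension: For the generalized Dirichlet problem for the prescribed Gaussian curvature equation −u'' + (1 + (u')²)^{3/2} = 0 on (0,1) with boundary conditions u(0) = −1, u(1) = 1, the function u defined by u(x) = −√(1 − x²) for x ∈ [0,1) and u(1) = 1 is a viscosity subsolution, the function v(x) = −√(1 − x²) on [0,1] is a viscosity supersolution, and u(1) = 1 > 0 = v(1); hence there exist a viscosity subsolution and a viscosity supersolution of the generalized Dirichlet problem with the subsolution strictly exceeding the supersolution at a point of [0,1]. -/

import Mathlib

/-!
The lower unit semicircle `v(x) = -√(1 - x²)` has curvature `1`, so it solves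
`-v'' + (1 + v'²)^{3/2} = 0` classically on `(-1, 1)`; a test function touching `v` from above
(below) at an interior point has the same slope and a larger (smaller) second derivative,
which gives the interior viscosity inequalities. At `x = 0` both functions satisfy the boundary
condition `w(0) = -1`. At `x = 1` the subsolution may jump up to `1`, since there `F_*` is bounded
by `u - 1 = 0`; and the supersolution inequality at `x = 1` is vacuous because `v` has a vertical
tangent there: a test function touching `v` from below at `1` would satisfy
`φ(1) - φ(x) ≥ √(1 - x²) ≥ √(1 - x)`, impossible for `φ` differentiable at `1`.
-/

open scoped Classical

/-- Lower envelope `F_*` of the generalized Dirichlet operator for the prescribed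
Gaussian curvature equation `-u'' + (1 + (u')²)^{3/2} = 0` on `(0,1)` with boundary
conditions `u(0) = -1`, `u(1) = 1`. -/
noncomputable def GCLower (x u p X : ℝ) : ℝ :=
  if x ∈ Set.Ioo (0:ℝ) 1 then -X + (1 + p ^ 2) ^ ((3:ℝ)/2)
  else if x = 0 then min (u + 1) (-X + (1 + p ^ 2) ^ ((3:ℝ)/2))
  else min (u - 1) (-X + (1 + p ^ 2) ^ ((3:ℝ)/2))

/-- Upper envelope `F^*` of the generalized Dirichlet operator for the prescribed
Gaussian curvature equation on `(0,1)` with boundary conditions `u(0) = -1`, `u(1) = 1`. -/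
noncomputable def GCUpper (x u p X : ℝ) : ℝ :=
  if x ∈ Set.Ioo (0:ℝ) 1 then -X + (1 + p ^ 2) ^ ((3:ℝ)/2)
  else if x = 0 then max (u + 1) (-X + (1 + p ^ 2) ^ ((3:ℝ)/2))
  else max (u - 1) (-X + (1 + p ^ 2) ^ ((3:ℝ)/2))

/-- Viscosity subsolution of the generalized Dirichlet problem for the prescribed
Gaussian curvature equation on `[0,1]`. -/
def IsGCSubsolution (u : ℝ → ℝ) : Prop :=
  UpperSemicontinuousOn u (Set.Icc 0 1) ∧
  ∀ φ : ℝ → ℝ, ContDiff ℝ 2 φ → ∀ x₀ ∈ Set.Icc (0:ℝ) 1,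
    IsLocalMaxOn (fun x => u x - φ x) (Set.Icc 0 1) x₀ →
      GCLower x₀ (u x₀) (deriv φ x₀) (deriv (deriv φ) x₀) ≤ 0

/-- Viscosity supersolution of the generalized Dirichlet problem for the prescribed
Gaussian curvature equation on `[0,1]`. -/
def IsGCSupersolution (w : ℝ → ℝ) : Prop :=
  LowerSemicontinuousOn w (Set.Icc 0 1) ∧
  ∀ φ : ℝ → ℝ, ContDiff ℝ 2 φ → ∀ x₀ ∈ Set.Icc (0:ℝ) 1,
    IsLocalMinOn (fun x => w x - φ x) (Set.Icc 0 1) x₀ →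
      0 ≤ GCUpper x₀ (w x₀) (deriv φ x₀) (deriv (deriv φ) x₀)

open Set Filter Topology

section SecondDerivative

variable {f w φ : ℝ → ℝ} {a : ℝ}

theorem deriv_deriv_eq_zero_of_isLocalMax_of_isLocalMin (hmax : IsLocalMax f a)
    (hmin : IsLocalMin f a) : deriv (deriv f) a = 0 := by
  have hconst : f =ᶠ[𝓝 a] fun _ => f a :=
    (hmax.and hmin).mono fun x hx => le_antisymm hx.1 hx.2
  have hderiv : deriv f =ᶠ[𝓝 a] fun _ => 0 :=
    hconst.eventuallyEq_nhds.mono fun x hx => by rw [hx.deriv_eq, deriv_const]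
  rw [hderiv.deriv_eq, deriv_const]

theorem IsLocalMax.deriv_deriv_nonpos (h : IsLocalMax f a) (hc : ContinuousAt f a) :
    deriv (deriv f) a ≤ 0 := by
  by_contra! hpos
  have hmin := isLocalMin_of_deriv_deriv_pos hpos h.deriv_eq_zero hc
  exact hpos.ne' (deriv_deriv_eq_zero_of_isLocalMax_of_isLocalMin h hmin)

theorem IsLocalMin.deriv_deriv_nonneg (h : IsLocalMin f a) (hc : ContinuousAt f a) :
    0 ≤ deriv (deriv f) a := by
  by_contra! hneg
  have hmax := isLocalMax_of_deriv_deriv_neg hneg h.deriv_eq_zero hc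
  exact hneg.ne (deriv_deriv_eq_zero_of_isLocalMax_of_isLocalMin hmax h)

theorem deriv_deriv_sub (hw : ContDiffAt ℝ 2 w a) (hφ : ContDiffAt ℝ 2 φ a) :
    deriv (deriv fun x => w x - φ x) a = deriv (deriv w) a - deriv (deriv φ) a := by
  have hsub : deriv (fun x => w x - φ x) =ᶠ[𝓝 a] fun x => deriv w x - deriv φ x :=
    ((hw.eventually (by simp)).and (hφ.eventually (by simp))).mono fun x hx =>
      deriv_fun_sub (hx.1.differentiableAt two_ne_zero) (hx.2.differentiableAt two_ne_zero)
  rw [hsub.deriv_eq]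
  exact deriv_sub ((hw.derivWithin (m := 1) le_rfl).differentiableAt one_ne_zero)
    ((hφ.derivWithin (m := 1) le_rfl).differentiableAt one_ne_zero)

theorem IsLocalMax.deriv_eq_and_deriv_deriv_le (hw : ContDiffAt ℝ 2 w a)
    (hφ : ContDiffAt ℝ 2 φ a) (h : IsLocalMax (fun x => w x - φ x) a) :
    deriv φ a = deriv w a ∧ deriv (deriv w) a ≤ deriv (deriv φ) a := by
  have hfermat := h.deriv_eq_zero
  rw [deriv_fun_sub (hw.differentiableAt two_ne_zero) (hφ.differentiableAt two_ne_zero)]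
    at hfermat
  have hsecond := h.deriv_deriv_nonpos (hw.continuousAt.sub hφ.continuousAt)
  rw [deriv_deriv_sub hw hφ] at hsecond
  constructor <;> linarith

theorem IsLocalMin.deriv_eq_and_le_deriv_deriv (hw : ContDiffAt ℝ 2 w a)
    (hφ : ContDiffAt ℝ 2 φ a) (h : IsLocalMin (fun x => w x - φ x) a) :
    deriv φ a = deriv w a ∧ deriv (deriv φ) a ≤ deriv (deriv w) a := by
  have hfermat := h.deriv_eq_zero
  rw [deriv_fun_sub (hw.differentiableAt two_ne_zero) (hφ.differentiableAt two_ne_zero)]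
    at hfermat
  have hsecond := h.deriv_deriv_nonneg (hw.continuousAt.sub hφ.continuousAt)
  rw [deriv_deriv_sub hw hφ] at hsecond
  constructor <;> linarith

end SecondDerivative

noncomputable def lowerSemicircle (x : ℝ) : ℝ := -√(1 - x ^ 2)

section LowerSemicircle

variable {x : ℝ} {φ : ℝ → ℝ}

theorem continuous_lowerSemicircle : Continuous lowerSemicircle := by
  unfold lowerSemicircle
  fun_prop

theorem lowerSemicircle_nonpos (x : ℝ) : lowerSemicircle x ≤ 0 :=
  neg_nonpos.2 (Real.sqrt_nonneg _)

theorem one_sub_sq_pos (hx : x ∈ Ioo (-1 : ℝ) 1) : 0 < 1 - x ^ 2 := by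
  nlinarith [hx.1, hx.2]

theorem contDiffAt_lowerSemicircle (hx : x ∈ Ioo (-1 : ℝ) 1) :
    ContDiffAt ℝ 2 lowerSemicircle x :=
  ((contDiffAt_const.sub (contDiffAt_id.pow 2)).sqrt (one_sub_sq_pos hx).ne').neg

theorem hasDerivAt_lowerSemicircle (hx : x ∈ Ioo (-1 : ℝ) 1) :
    HasDerivAt lowerSemicircle (x / √(1 - x ^ 2)) x := by
  have hs : 0 < √(1 - x ^ 2) := Real.sqrt_pos.2 (one_sub_sq_pos hx)
  refine (((hasDerivAt_pow 2 x).const_sub 1).sqrt (one_sub_sq_pos hx).ne').neg.congr_deriv ?_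
  field_simp
  norm_num

theorem hasDerivAt_div_sqrt_one_sub_sq (hx : x ∈ Ioo (-1 : ℝ) 1) :
    HasDerivAt (fun y => y / √(1 - y ^ 2)) ((√(1 - x ^ 2))⁻¹ ^ 3) x := by
  have hs : 0 < √(1 - x ^ 2) := Real.sqrt_pos.2 (one_sub_sq_pos hx)
  have hss : √(1 - x ^ 2) ^ 2 = 1 - x ^ 2 := Real.sq_sqrt (one_sub_sq_pos hx).le
  refine ((hasDerivAt_id x).fun_div (((hasDerivAt_pow 2 x).const_sub 1).sqrt
    (one_sub_sq_pos hx).ne') hs.ne').congr_deriv ?_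
  field_simp
  norm_num
  linear_combination 2 * hss

theorem deriv_deriv_lowerSemicircle (hx : x ∈ Ioo (-1 : ℝ) 1) :
    deriv (deriv lowerSemicircle) x = (1 + deriv lowerSemicircle x ^ 2) ^ ((3 : ℝ) / 2) := by
  have hs : 0 < √(1 - x ^ 2) := Real.sqrt_pos.2 (one_sub_sq_pos hx)
  have hss : √(1 - x ^ 2) ^ 2 = 1 - x ^ 2 := Real.sq_sqrt (one_sub_sq_pos hx).le
  have hderiv : deriv lowerSemicircle =ᶠ[𝓝 x] fun y => y / √(1 - y ^ 2) :=
    (isOpen_Ioo.eventually_mem hx).mono fun y hy => (hasDerivAt_lowerSemicircle hy).deriv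
  have hslope : 1 + (x / √(1 - x ^ 2)) ^ 2 = (√(1 - x ^ 2))⁻¹ ^ 2 := by
    field_simp
    linear_combination hss
  rw [hderiv.deriv_eq, (hasDerivAt_div_sqrt_one_sub_sq hx).deriv,
    (hasDerivAt_lowerSemicircle hx).deriv, hslope,
    ← Real.rpow_natCast (√(1 - x ^ 2))⁻¹ 2, ← Real.rpow_mul (by positivity)]
  norm_num

theorem not_isLocalMinOn_lowerSemicircle_sub (hφ : DifferentiableWithinAt ℝ φ (Icc 0 1) 1) :
    ¬IsLocalMinOn (fun x => lowerSemicircle x - φ x) (Icc 0 1) 1 := by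
  intro hmin
  obtain ⟨C, hC⟩ := hφ.isBigO_sub.bound
  have hleft : 𝓝[<] (1 : ℝ) ≤ 𝓝[Icc 0 1] 1 := nhdsWithin_le_of_mem (Icc_mem_nhdsLT zero_lt_one)
  have hsmall : ∀ᶠ y in 𝓝[<] (1 : ℝ), C ^ 2 * (1 - y) < 1 :=
    nhdsWithin_le_nhds <| (by fun_prop : Continuous fun y : ℝ => C ^ 2 * (1 - y)).continuousAt
      |>.eventually_lt continuousAt_const (by simp)
  have hnear : ∀ᶠ y in 𝓝[<] (1 : ℝ), y ∈ Ico 0 1 := Ico_mem_nhdsLT zero_lt_one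
  obtain ⟨y, hmin_y, hC_y, hsmall_y, hy0, hy1⟩ := ((hmin.filter_mono hleft).and
    ((hC.filter_mono hleft).and (hsmall.and hnear))).exists
  have hbound : √(1 - y ^ 2) ≤ C * (1 - y) := by
    simp only [lowerSemicircle, one_pow, sub_self, Real.sqrt_zero, neg_zero] at hmin_y
    rw [Real.norm_eq_abs, Real.norm_eq_abs, abs_sub_comm y, abs_of_pos (sub_pos.2 hy1)] at hC_y
    linarith [neg_abs_le (φ y - φ 1)]
  have hsq := (Real.sqrt_le_left ((Real.sqrt_nonneg _).trans hbound)).1 hbound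
  have hy1' : 0 < 1 - y := sub_pos.2 hy1
  nlinarith [mul_pos hy1' (sub_pos.2 hsmall_y), mul_nonneg hy0 hy1'.le]

end LowerSemicircle

theorem upperSemicontinuous_ite_lt {α β : Type*} [TopologicalSpace α] [LinearOrder α]
    [OrderClosedTopology α] [TopologicalSpace β] [LinearOrder β] [OrderTopology β] {f : α → β}
    {b : α} {c : β} (hf : ContinuousOn f (Iio b)) (hfc : ∀ x < b, f x ≤ c) :
    UpperSemicontinuous fun x => if x < b then f x else c := by
  intro x
  by_cases hx : x < b
  · refine ContinuousAt.upperSemicontinuousAt ?_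
    refine (hf.continuousAt (Iio_mem_nhds hx)).congr ?_
    filter_upwards [eventually_lt_nhds hx] with y hy using (if_pos hy).symm
  · intro y hy
    simp only [if_neg hx] at hy
    refine Eventually.of_forall fun z => ?_
    dsimp only
    split_ifs with hz
    exacts [(hfc z hz).trans_lt hy, hy]

section GaussianCurvature

variable {x₀ u p X : ℝ} {φ : ℝ → ℝ}

theorem gcLower_of_mem_Ioo (hx₀ : x₀ ∈ Ioo 0 1) :
    GCLower x₀ u p X = -X + (1 + p ^ 2) ^ ((3 : ℝ) / 2) :=
  if_pos hx₀

theorem gcUpper_of_mem_Ioo (hx₀ : x₀ ∈ Ioo 0 1) :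
    GCUpper x₀ u p X = -X + (1 + p ^ 2) ^ ((3 : ℝ) / 2) :=
  if_pos hx₀

theorem gcLower_zero_le : GCLower 0 u p X ≤ u + 1 := by
  simp [GCLower]

theorem gcLower_one_le : GCLower 1 u p X ≤ u - 1 := by
  simp [GCLower]

theorem le_gcUpper_zero : u + 1 ≤ GCUpper 0 u p X := by
  simp [GCUpper]

theorem gcLower_nonpos_of_isLocalMax (hφ : ContDiffAt ℝ 2 φ x₀) (hx₀ : x₀ ∈ Ioo 0 1)
    (h : IsLocalMax (fun x => lowerSemicircle x - φ x) x₀) :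
    GCLower x₀ u (deriv φ x₀) (deriv (deriv φ) x₀) ≤ 0 := by
  have hx₀' : x₀ ∈ Ioo (-1 : ℝ) 1 := ⟨by linarith [hx₀.1], hx₀.2⟩
  obtain ⟨hslope, hcurv⟩ := h.deriv_eq_and_deriv_deriv_le (contDiffAt_lowerSemicircle hx₀') hφ
  rw [gcLower_of_mem_Ioo hx₀, hslope, ← deriv_deriv_lowerSemicircle hx₀']
  linarith

theorem gcUpper_nonneg_of_isLocalMin (hφ : ContDiffAt ℝ 2 φ x₀) (hx₀ : x₀ ∈ Ioo 0 1)
    (h : IsLocalMin (fun x => lowerSemicircle x - φ x) x₀) :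
    0 ≤ GCUpper x₀ u (deriv φ x₀) (deriv (deriv φ) x₀) := by
  have hx₀' : x₀ ∈ Ioo (-1 : ℝ) 1 := ⟨by linarith [hx₀.1], hx₀.2⟩
  obtain ⟨hslope, hcurv⟩ := h.deriv_eq_and_le_deriv_deriv (contDiffAt_lowerSemicircle hx₀') hφ
  rw [gcUpper_of_mem_Ioo hx₀, hslope, ← deriv_deriv_lowerSemicircle hx₀']
  linarith

theorem isGCSubsolution_ite_lowerSemicircle :
    IsGCSubsolution fun x => if x < 1 then lowerSemicircle x else 1 := by
  refine ⟨(upperSemicontinuous_ite_lt continuous_lowerSemicircle.continuousOn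
    fun x _ => (lowerSemicircle_nonpos x).trans zero_le_one).upperSemicontinuousOn _, ?_⟩
  intro φ hφ x₀ hx₀ hmax
  rcases eq_endpoints_or_mem_Ioo_of_mem_Icc hx₀ with rfl | rfl | hx₀
  · exact gcLower_zero_le.trans_eq (by norm_num [lowerSemicircle])
  · exact gcLower_one_le.trans_eq (by norm_num)
  · refine gcLower_nonpos_of_isLocalMax hφ.contDiffAt hx₀ ?_
    refine (hmax.isLocalMax (Icc_mem_nhds hx₀.1 hx₀.2)).congr ?_
    filter_upwards [eventually_lt_nhds hx₀.2] with y hy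
    simp only [if_pos hy]

theorem isGCSupersolution_lowerSemicircle : IsGCSupersolution lowerSemicircle := by
  refine ⟨continuous_lowerSemicircle.lowerSemicontinuous.lowerSemicontinuousOn _, ?_⟩
  intro φ hφ x₀ hx₀ hmin
  rcases eq_endpoints_or_mem_Ioo_of_mem_Icc hx₀ with rfl | rfl | hx₀
  · exact le_gcUpper_zero.trans_eq' (by norm_num [lowerSemicircle])
  · exact absurd hmin (not_isLocalMinOn_lowerSemicircle_sub
      (hφ.differentiable two_ne_zero).differentiableAt.differentiableWithinAt)
  · exact gcUpper_nonneg_of_isLocalMin hφ.contDiffAt hx₀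
      (hmin.isLocalMin (Icc_mem_nhds hx₀.1 hx₀.2))

end GaussianCurvature

/-- **Failure of the strong comparison principle in one dimension**: for the generalized
Dirichlet problem for the prescribed Gaussian curvature equation on `(0,1)` with boundary
conditions `u(0) = -1`, `u(1) = 1`, the function equal to `-√(1 - x²)` on `[0,1)` and `1`
at `x = 1` is a viscosity subsolution, `v(x) = -√(1 - x²)` is a viscosity supersolution,
and the subsolution strictly exceeds the supersolution at `x = 1`. -/
theorem gaussian_curvature_strong_comparison_fails :
    IsGCSubsolution (fun x : ℝ => if x < 1 then -Real.sqrt (1 - x ^ 2) else 1) ∧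
    IsGCSupersolution (fun x : ℝ => -Real.sqrt (1 - x ^ 2)) ∧
    (fun x : ℝ => if x < 1 then -Real.sqrt (1 - x ^ 2) else 1) 1 = 1 ∧
    (fun x : ℝ => -Real.sqrt (1 - x ^ 2)) 1 = 0 ∧
    (∃ x₀ ∈ Set.Icc (0:ℝ) 1,
      (fun x : ℝ => -Real.sqrt (1 - x ^ 2)) x₀
        < (fun x : ℝ => if x < 1 then -Real.sqrt (1 - x ^ 2) else 1) x₀) :=
  ⟨isGCSubsolution_ite_lowerSemicircle, isGCSupersolution_lowerSemicircle, by norm_num,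
    by norm_num, 1, right_mem_Icc.2 zero_le_one, by norm_num⟩
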